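/- arXiv:1604.06609 — 5 statements merged into one kernel-verified Lean document; each statement's English description precedes it below -/
import Mathlib

section
/- The function Λ satisfies the Riccati ordinary differential equation Λ'(t) = −q + Λ(t)²/η for every t ∈ [0,T], together with the terminal condition Λ(T) = λ. (Explicit solution of the Riccati equation (4.3) arising in the optimal tracking problem with price impact.) -/
/-!
Writing `Λ = -η D'/D` turns the Riccati equation `Λ' = -q + Λ²/η` into the linear equation
`D'' = (q/η) D`. Here `D(t) = (λ/η) sinh (c(T-t)) + c cosh (c(T-t))`, which solves it with
`c² = q/η`, stays positive for `t ≤ T`, and has `-η D'(T)/D(T) = η · (λ/η) · c / c = λ`.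
-/

open Real

lemma hasDerivAt_riccati_of_linear_second_order {D D' : ℝ → ℝ} {k η t : ℝ}
    (hD : HasDerivAt D (D' t) t) (hD' : HasDerivAt D' (k * D t) t) (hDt : D t ≠ 0)
    (hη : η ≠ 0) :
    HasDerivAt (fun s => -η * D' s / D s) (-(η * k) + (-η * D' t / D t) ^ 2 / η) t := by
  refine ((hD'.const_mul (-η)).div hD hDt).congr_deriv ?_
  field_simp
  ring

lemma hasDerivAt_mul_sinh_add_mul_cosh (A B c T t : ℝ) :
    HasDerivAt (fun s => A * sinh (c * (T - s)) + B * cosh (c * (T - s)))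
      (-c * (B * sinh (c * (T - t)) + A * cosh (c * (T - t)))) t := by
  have hu : HasDerivAt (fun s => c * (T - s)) (-c) t := by
    simpa using ((hasDerivAt_id t).const_sub T).const_mul c
  exact ((hu.sinh.const_mul A).add (hu.cosh.const_mul B)).congr_deriv (by ring)

lemma mul_sinh_add_mul_cosh_pos {a c u : ℝ} (ha : 0 ≤ a) (hc : 0 < c) (hu : 0 ≤ u) :
    0 < a * sinh u + c * cosh u :=
  add_pos_of_nonneg_of_pos (mul_nonneg ha (sinh_nonneg_iff.mpr hu)) (mul_pos hc (cosh_pos u))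

theorem stmt_0_general (T η q lam : ℝ) (hη : 0 < η) (hq : 0 < q) (hlam : 0 ≤ lam)
    (c : ℝ) (hc : c = Real.sqrt (q / η))
    (Lam : ℝ → ℝ)
    (hLam : ∀ t, Lam t =
      η * c * (c * Real.sinh (c * (T - t)) + (lam / η) * Real.cosh (c * (T - t))) /
        ((lam / η) * Real.sinh (c * (T - t)) + c * Real.cosh (c * (T - t)))) :
    (∀ t ∈ Set.Icc (0 : ℝ) T, HasDerivAt Lam (-q + (Lam t) ^ 2 / η) t) ∧ Lam T = lam := by
  have hc0 : 0 < c := hc ▸ sqrt_pos.mpr (div_pos hq hη)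
  have hq_eq : q = η * c ^ 2 := by
    rw [hc, sq_sqrt (div_pos hq hη).le]
    field_simp
  set D := fun s => lam / η * sinh (c * (T - s)) + c * cosh (c * (T - s))
  set D' := fun s => -c * (c * sinh (c * (T - s)) + lam / η * cosh (c * (T - s)))
  have hLam_eq : Lam = fun s => -η * D' s / D s := by
    funext s
    rw [hLam]
    ring
  refine ⟨fun t ht => ?_, ?_⟩
  · have hDt : D t ≠ 0 :=
      (mul_sinh_add_mul_cosh_pos (div_nonneg hlam hη.le) hc0
        (mul_nonneg hc0.le (sub_nonneg.mpr ht.2))).ne'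
    have hD'' : HasDerivAt D' (c ^ 2 * D t) t :=
      ((hasDerivAt_mul_sinh_add_mul_cosh c (lam / η) c T t).const_mul (-c)).congr_deriv (by ring)
    rw [hq_eq, hLam_eq]
    exact hasDerivAt_riccati_of_linear_second_order (hasDerivAt_mul_sinh_add_mul_cosh _ _ c T t)
      hD'' hDt hη.ne'
  · rw [hLam T]
    simp only [sub_self, mul_zero, sinh_zero, cosh_zero, mul_one, zero_add]
    field_simp

/-- Explicit solution of the Riccati ODE (4.3): Λ'(t) = -q + Λ(t)²/η on [0,T], Λ(T) = λ. -/
theorem stmt_0 (T η q lam : ℝ) (hT : 0 < T) (hη : 0 < η) (hq : 0 < q) (hlam : 0 ≤ lam)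
    (c : ℝ) (hc : c = Real.sqrt (q / η))
    (Lam : ℝ → ℝ)
    (hLam : ∀ t, Lam t =
      η * c * (c * Real.sinh (c * (T - t)) + (lam / η) * Real.cosh (c * (T - t))) /
        ((lam / η) * Real.sinh (c * (T - t)) + c * Real.cosh (c * (T - t)))) :
    (∀ t ∈ Set.Icc (0 : ℝ) T, HasDerivAt Lam (-q + (Lam t) ^ 2 / η) t) ∧ Lam T = lam :=
  stmt_0_general T η q lam hη hq hlam c hc Lam hLam
end

section
/- For all 0 ≤ t ≤ s ≤ T, exp(−∫_t^s Λ(u)/η du) = (c·cosh(c(T−s)) + (λ/η)·sinh(c(T−s))) / (c·cosh(c(T−t)) + (λ/η)·sinh(c(T−t))). (The exponential integral identity used to obtain the closed-form optimal trading rate in Section 4.1.) -/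
open Real

/-! `Λ / η` is minus the logarithmic derivative of
`D u = c cosh (c (T - u)) + (λ / η) sinh (c (T - u))`, which is positive for `u ≤ T`;
hence `∫ₜˢ Λ / η = log D t - log D s`. -/

open Set intervalIntegral in
theorem exp_integral_deriv_div_self {f f' : ℝ → ℝ} {a b : ℝ}
    (hf : ∀ u ∈ uIcc a b, HasDerivAt f (f' u) u) (hf' : ContinuousOn f' (uIcc a b))
    (hpos : ∀ u ∈ uIcc a b, 0 < f u) :
    exp (∫ u in a..b, f' u / f u) = f b / f a := by
  have hcont : ContinuousOn f (uIcc a b) := fun u hu => (hf u hu).continuousAt.continuousWithinAt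
  have hint : IntervalIntegrable (fun u => f' u / f u) MeasureTheory.volume a b :=
    (hf'.div hcont fun u hu => (hpos u hu).ne').intervalIntegrable
  rw [integral_eq_sub_of_hasDerivAt (fun u hu => (hf u hu).log (hpos u hu).ne') hint, exp_sub,
    exp_log (hpos b right_mem_uIcc), exp_log (hpos a left_mem_uIcc)]

theorem hasDerivAt_cosh_add_sinh_sub (c m T u : ℝ) :
    HasDerivAt (fun u => c * cosh (c * (T - u)) + m * sinh (c * (T - u)))
      (-(c * (c * sinh (c * (T - u)) + m * cosh (c * (T - u))))) u := by
  have harg : HasDerivAt (fun u => c * (T - u)) (-c) u := by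
    simpa using ((hasDerivAt_id u).const_sub T).const_mul c
  have hcosh := ((hasDerivAt_cosh _).comp u harg).const_mul c
  have hsinh := ((hasDerivAt_sinh _).comp u harg).const_mul m
  exact (hcosh.add hsinh).congr_deriv (by ring)

theorem cosh_add_sinh_sub_pos {c m T u : ℝ} (hc : 0 < c) (hm : 0 ≤ m) (hu : u ≤ T) :
    0 < c * cosh (c * (T - u)) + m * sinh (c * (T - u)) := by
  have hsinh : 0 ≤ sinh (c * (T - u)) := sinh_nonneg_iff.mpr (by nlinarith)
  have := cosh_pos (c * (T - u))
  positivity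

theorem stmt_1_general (T η q lam : ℝ) (hη : 0 < η) (hq : 0 < q) (hlam : 0 ≤ lam)
    (c : ℝ) (hc : c = Real.sqrt (q / η))
    (Lam : ℝ → ℝ)
    (hLam : ∀ t, Lam t =
      η * c * (c * Real.sinh (c * (T - t)) + (lam / η) * Real.cosh (c * (T - t))) /
        ((lam / η) * Real.sinh (c * (T - t)) + c * Real.cosh (c * (T - t)))) :
    ∀ t s : ℝ, 0 ≤ t → t ≤ s → s ≤ T →
      Real.exp (-(∫ u in t..s, Lam u / η)) =
        (c * Real.cosh (c * (T - s)) + (lam / η) * Real.sinh (c * (T - s))) /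
          (c * Real.cosh (c * (T - t)) + (lam / η) * Real.sinh (c * (T - t))) := by
  intro t s _ hts hsT
  have hc0 : 0 < c := hc ▸ sqrt_pos.mpr (div_pos hq hη)
  set m := lam / η
  set D := fun u => c * cosh (c * (T - u)) + m * sinh (c * (T - u))
  set D' := fun u => -(c * (c * sinh (c * (T - u)) + m * cosh (c * (T - u))))
  have hintegrand : (fun u => Lam u / η) = fun u => -(D' u / D u) := by
    ext u
    rw [hLam u]
    field_simp
    ring
  have hDpos : ∀ u ∈ Set.uIcc t s, 0 < D u := fun u hu =>
    cosh_add_sinh_sub_pos hc0 (div_nonneg hlam hη.le)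
      ((Set.uIcc_of_le hts ▸ hu).2.trans hsT)
  have hexp : exp (∫ u in t..s, D' u / D u) = D s / D t :=
    exp_integral_deriv_div_self (fun u _ => hasDerivAt_cosh_add_sinh_sub c m T u)
      (by fun_prop) hDpos
  rw [hintegrand, intervalIntegral.integral_neg, neg_neg, hexp]

/-- The exponential integral identity of Section 4.1:
exp(-∫_t^s Λ(u)/η du) = (c·cosh(c(T-s)) + (λ/η)·sinh(c(T-s))) / (c·cosh(c(T-t)) + (λ/η)·sinh(c(T-t))). -/
theorem stmt_1 (T η q lam : ℝ) (hT : 0 < T) (hη : 0 < η) (hq : 0 < q) (hlam : 0 ≤ lam)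
    (c : ℝ) (hc : c = Real.sqrt (q / η))
    (Lam : ℝ → ℝ)
    (hLam : ∀ t, Lam t =
      η * c * (c * Real.sinh (c * (T - t)) + (lam / η) * Real.cosh (c * (T - t))) /
        ((lam / η) * Real.sinh (c * (T - t)) + c * Real.cosh (c * (T - t)))) :
    ∀ t s : ℝ, 0 ≤ t → t ≤ s → s ≤ T →
      Real.exp (-(∫ u in t..s, Lam u / η)) =
        (c * Real.cosh (c * (T - s)) + (lam / η) * Real.sinh (c * (T - s))) /
          (c * Real.cosh (c * (T - t)) + (lam / η) * Real.sinh (c * (T - t))) :=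
  stmt_1_general T η q lam hη hq hlam c hc Lam hLam
end

section
/- For every t ∈ [0,T], Λ(t)·ω(t,T) = λ·exp(−∫_t^T Λ(s)/η ds). (This identity shows that the coefficient of the expected terminal benchmark 𝔼[H|𝓕_t⁰] in the optimal tracking rate −(Λ_t/η)(X_t* − Î_t^H) matches the corresponding term (λ/η)e^{−∫_t^T Λ_s/η ds} coming from the explicit solution of the linear BSDE (4.4).) -/
/-!
With `D s = (λ/η) sinh (c (T - s)) + c cosh (c (T - s))` one has `D' = -c N` where `N` is the
numerator of `Λ`, so `Λ/η = -D'/D` and `exp (-∫ₜᵀ Λ/η) = D T / D t = c / D t`. On the other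
side `N` cancels in `Λ t · ω t`, which leaves `η c (λ/η) / D t = λ c / D t`.
-/

open Real Set

theorem exp_integral_div_eq_div_of_hasDerivAt {f f' : ℝ → ℝ} {a b : ℝ} (hab : a ≤ b)
    (hf : ∀ x ∈ Icc a b, HasDerivAt f (f' x) x) (hf' : ContinuousOn f' (Icc a b))
    (hpos : ∀ x ∈ Icc a b, 0 < f x) :
    exp (∫ x in a..b, f' x / f x) = f b / f a := by
  have hlog : ∀ x ∈ uIcc a b, HasDerivAt (fun y => log (f y)) (f' x / f x) x := by
    rw [uIcc_of_le hab]
    exact fun x hx => (hf x hx).log (hpos x hx).ne'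
  have hcont : ContinuousOn f (Icc a b) := fun x hx => (hf x hx).continuousAt.continuousWithinAt
  have hint : IntervalIntegrable (fun x => f' x / f x) MeasureTheory.volume a b :=
    (hf'.div hcont fun x hx => (hpos x hx).ne').intervalIntegrable_of_Icc hab
  rw [intervalIntegral.integral_eq_sub_of_hasDerivAt hlog hint, exp_sub,
    exp_log (hpos b ⟨hab, le_rfl⟩), exp_log (hpos a ⟨le_rfl, hab⟩)]

theorem hasDerivAt_sinh_add_cosh (a b c T s : ℝ) :
    HasDerivAt (fun u => a * sinh (c * (T - u)) + b * cosh (c * (T - u)))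
      (-(c * (b * sinh (c * (T - s)) + a * cosh (c * (T - s))))) s := by
  have hlin : HasDerivAt (fun u => c * (T - u)) (-c) s := by
    simpa using ((hasDerivAt_id s).const_sub T).const_mul c
  refine ((hlin.sinh.const_mul a).add (hlin.cosh.const_mul b)).congr_deriv ?_
  ring

theorem sinh_add_cosh_pos {a b c T s : ℝ} (ha : 0 ≤ a) (hb : 0 < b) (hc : 0 ≤ c) (hs : s ≤ T) :
    0 < a * sinh (c * (T - s)) + b * cosh (c * (T - s)) := by
  have hsinh : 0 ≤ sinh (c * (T - s)) := sinh_nonneg_iff.mpr (mul_nonneg hc (sub_nonneg.mpr hs))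
  have := mul_pos hb (cosh_pos (c * (T - s)))
  positivity

theorem exp_neg_integral_sinh_add_cosh {a b c t T : ℝ} (ha : 0 ≤ a) (hb : 0 < b) (hc : 0 ≤ c)
    (ht : t ≤ T) :
    exp (-∫ s in t..T, c * (b * sinh (c * (T - s)) + a * cosh (c * (T - s))) /
        (a * sinh (c * (T - s)) + b * cosh (c * (T - s)))) =
      b / (a * sinh (c * (T - t)) + b * cosh (c * (T - t))) := by
  rw [← intervalIntegral.integral_neg]
  simp_rw [← neg_div]
  rw [exp_integral_div_eq_div_of_hasDerivAt ht (fun s _ => hasDerivAt_sinh_add_cosh a b c T s)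
    (by fun_prop) fun s hs => sinh_add_cosh_pos ha hb hc hs.2]
  simp

theorem stmt_14_general (T η q lam : ℝ) (hη : 0 < η) (hq : 0 < q) (hlam : 0 ≤ lam)
    (c : ℝ) (hc : c = Real.sqrt (q / η))
    (Lam : ℝ → ℝ)
    (hLam : ∀ t, Lam t =
      η * c * (c * Real.sinh (c * (T - t)) + (lam / η) * Real.cosh (c * (T - t))) /
        ((lam / η) * Real.sinh (c * (T - t)) + c * Real.cosh (c * (T - t))))
    (ω : ℝ → ℝ)
    (hω : ∀ t, ω t =
      (lam / η) / (c * Real.sinh (c * (T - t)) + (lam / η) * Real.cosh (c * (T - t)))) :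
    ∀ t ∈ Set.Icc (0 : ℝ) T,
      Lam t * ω t = lam * Real.exp (-(∫ s in t..T, Lam s / η)) := by
  rintro t ⟨-, htT⟩
  rcases hlam.eq_or_lt with rfl | hlam_pos
  · simp [hω]
  have hc_pos : 0 < c := hc ▸ sqrt_pos.mpr (div_pos hq hη)
  have hr : 0 < lam / η := div_pos hlam_pos hη
  have hΛ : ∀ s, Lam s / η = c * (c * sinh (c * (T - s)) + (lam / η) * cosh (c * (T - s))) /
      ((lam / η) * sinh (c * (T - s)) + c * cosh (c * (T - s))) := by
    intro s
    rw [hLam, mul_assoc, mul_div_assoc, mul_div_cancel_left₀ _ hη.ne']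
  simp_rw [hΛ]
  rw [exp_neg_integral_sinh_add_cosh hr.le hc_pos hc_pos.le htT, hLam, hω]
  have hN := sinh_add_cosh_pos hc_pos.le hr hc_pos.le htT
  have hD := sinh_add_cosh_pos hr.le hc_pos hc_pos.le htT
  field_simp

/-- The identity Λ(t)·ω(t,T) = λ·exp(−∫_t^T Λ(s)/η ds) of Section 4.1. -/
theorem stmt_14 (T η q lam : ℝ) (hT : 0 < T) (hη : 0 < η) (hq : 0 < q) (hlam : 0 ≤ lam)
    (c : ℝ) (hc : c = Real.sqrt (q / η))
    (Lam : ℝ → ℝ)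
    (hLam : ∀ t, Lam t =
      η * c * (c * Real.sinh (c * (T - t)) + (lam / η) * Real.cosh (c * (T - t))) /
        ((lam / η) * Real.sinh (c * (T - t)) + c * Real.cosh (c * (T - t))))
    (ω : ℝ → ℝ)
    (hω : ∀ t, ω t =
      (lam / η) / (c * Real.sinh (c * (T - t)) + (lam / η) * Real.cosh (c * (T - t)))) :
    ∀ t ∈ Set.Icc (0 : ℝ) T,
      Lam t * ω t = lam * Real.exp (-(∫ s in t..T, Lam s / η)) :=
  stmt_14_general T η q lam hη hq hlam c hc Lam hLam ω hω
end

section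
/- For every 0 ≤ t < T and every s ∈ [t,T], Λ(t)·(1 − ω(t,T))·K(t,s) = q·exp(−∫_t^s Λ(u)/η du). (This identity shows that the coefficient of the running target I_s in the optimal tracking rate −(Λ_t/η)(X_t* − Î_t^H) matches the corresponding term (q/η)e^{−∫_t^s Λ_u/η du} coming from the explicit solution of the linear BSDE (4.4).) -/
/-!
With `m = λ / η` and `D u = hypDenom c m T u = m sinh (c (T - u)) + c cosh (c (T - u))`,
the rate is a logarithmic derivative, `Λ / η = -D' / D`, so `exp (-∫ₜˢ Λ / η) = D s / D t`.
On the other side, writing `Λ = η c N / D`, the numerator of `K t s` is `c D s`, its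
denominator is `N t - m`, and `1 - ω t = (N t - m) / N t`;
everything cancels to `η c² D s / D t = q D s / D t`.
-/

open Real Set

theorem exp_integral_div_eq_div {f f' : ℝ → ℝ} {a b : ℝ}
    (hderiv : ∀ u ∈ uIcc a b, HasDerivAt f (f' u) u) (hf' : ContinuousOn f' (uIcc a b))
    (hpos : ∀ u ∈ uIcc a b, 0 < f u) :
    exp (∫ u in a..b, f' u / f u) = f b / f a := by
  have hlog : ∀ u ∈ uIcc a b, HasDerivAt (fun u => log (f u)) (f' u / f u) u :=
    fun u hu => (hderiv u hu).log (hpos u hu).ne'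
  have hint : IntervalIntegrable (fun u => f' u / f u) MeasureTheory.volume a b :=
    (hf'.div (HasDerivAt.continuousOn hderiv) fun u hu => (hpos u hu).ne').intervalIntegrable
  rw [intervalIntegral.integral_eq_sub_of_hasDerivAt hlog hint, exp_sub,
    exp_log (hpos b right_mem_uIcc), exp_log (hpos a left_mem_uIcc)]

section Hyperbolic

variable (c m T : ℝ)

noncomputable def hypDenom (u : ℝ) : ℝ :=
  m * sinh (c * (T - u)) + c * cosh (c * (T - u))

theorem hasDerivAt_hypDenom (u : ℝ) :
    HasDerivAt (hypDenom c m T)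
      (-c * (c * sinh (c * (T - u)) + m * cosh (c * (T - u)))) u := by
  have hlin : HasDerivAt (fun u : ℝ => c * (T - u)) (-c) u := by
    simpa using ((hasDerivAt_id u).const_sub T).const_mul c
  have hsinh := ((hasDerivAt_sinh _).comp u hlin).const_mul m
  have hcosh := ((hasDerivAt_cosh _).comp u hlin).const_mul c
  exact (hsinh.add hcosh).congr_deriv (by ring)

variable {c m T}

theorem hypDenom_pos (hc : 0 < c) (hm : 0 ≤ m) {u : ℝ} (hu : u ≤ T) :
    0 < hypDenom c m T u := by
  have hsinh : 0 ≤ sinh (c * (T - u)) := sinh_nonneg_iff.mpr (by nlinarith)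
  unfold hypDenom
  positivity

theorem sinh_add_cosh_sub_one_pos (hc : 0 < c) (hm : 0 ≤ m) {t : ℝ} (ht : t < T) :
    0 < c * sinh (c * (T - t)) + m * (cosh (c * (T - t)) - 1) := by
  have hsinh : 0 < sinh (c * (T - t)) := sinh_pos_iff.mpr (by nlinarith)
  have hcosh : 0 ≤ cosh (c * (T - t)) - 1 := sub_nonneg.mpr (one_le_cosh _)
  positivity

end Hyperbolic

theorem stmt_15_general (T η q lam : ℝ) (hη : 0 < η) (hq : 0 < q) (hlam : 0 ≤ lam)
    (c : ℝ) (hc : c = Real.sqrt (q / η))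
    (Lam : ℝ → ℝ)
    (hLam : ∀ t, Lam t =
      η * c * (c * Real.sinh (c * (T - t)) + (lam / η) * Real.cosh (c * (T - t))) /
        ((lam / η) * Real.sinh (c * (T - t)) + c * Real.cosh (c * (T - t))))
    (ω : ℝ → ℝ)
    (hω : ∀ t, ω t =
      (lam / η) / (c * Real.sinh (c * (T - t)) + (lam / η) * Real.cosh (c * (T - t))))
    (K : ℝ → ℝ → ℝ)
    (hK : ∀ t s, K t s =
      c * (c * Real.cosh (c * (T - s)) + (lam / η) * Real.sinh (c * (T - s))) /
        (c * Real.sinh (c * (T - t)) + (lam / η) * (Real.cosh (c * (T - t)) - 1))) :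
    ∀ t ∈ Set.Ico (0 : ℝ) T, ∀ s ∈ Set.Icc t T,
      Lam t * (1 - ω t) * K t s = q * Real.exp (-(∫ u in t..s, Lam u / η)) := by
  rintro t ⟨-, htT⟩ s ⟨hts, hsT⟩
  set m := lam / η
  have hm : 0 ≤ m := div_nonneg hlam hη.le
  have hc0 : 0 < c := hc ▸ sqrt_pos.mpr (div_pos hq hη)
  have hq : q = η * c ^ 2 := by
    rw [hc, sq_sqrt (div_pos hq hη).le]; field_simp
  have hrate : ∀ u, Lam u / η =
      -(-c * (c * sinh (c * (T - u)) + m * cosh (c * (T - u))) / hypDenom c m T u) := by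
    intro u; rw [hLam, hypDenom]; field_simp
  have hexp : exp (-(∫ u in t..s, Lam u / η)) = hypDenom c m T s / hypDenom c m T t := by
    simp_rw [hrate, intervalIntegral.integral_neg, neg_neg]
    refine exp_integral_div_eq_div (fun u _ => hasDerivAt_hypDenom c m T u) (by fun_prop)
      fun u hu => hypDenom_pos hc0 hm ?_
    rw [uIcc_of_le hts] at hu
    exact hu.2.trans hsT
  have hDt := hypDenom_pos hc0 hm htT.le
  have hNm := sinh_add_cosh_sub_one_pos hc0 hm htT
  rw [hexp, hLam, hω, hK, hq]
  unfold hypDenom at hDt ⊢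
  field_simp
  ring

/-- The identity Λ(t)·(1 − ω(t,T))·K(t,s) = q·exp(−∫_t^s Λ(u)/η du) of Section 4.1. -/
theorem stmt_15 (T η q lam : ℝ) (hT : 0 < T) (hη : 0 < η) (hq : 0 < q) (hlam : 0 ≤ lam)
    (c : ℝ) (hc : c = Real.sqrt (q / η))
    (Lam : ℝ → ℝ)
    (hLam : ∀ t, Lam t =
      η * c * (c * Real.sinh (c * (T - t)) + (lam / η) * Real.cosh (c * (T - t))) /
        ((lam / η) * Real.sinh (c * (T - t)) + c * Real.cosh (c * (T - t))))
    (ω : ℝ → ℝ)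
    (hω : ∀ t, ω t =
      (lam / η) / (c * Real.sinh (c * (T - t)) + (lam / η) * Real.cosh (c * (T - t))))
    (K : ℝ → ℝ → ℝ)
    (hK : ∀ t s, K t s =
      c * (c * Real.cosh (c * (T - s)) + (lam / η) * Real.sinh (c * (T - s))) /
        (c * Real.sinh (c * (T - t)) + (lam / η) * (Real.cosh (c * (T - t)) - 1))) :
    ∀ t ∈ Set.Ico (0 : ℝ) T, ∀ s ∈ Set.Icc t T,
      Lam t * (1 - ω t) * K t s = q * Real.exp (-(∫ u in t..s, Lam u / η)) :=
  stmt_15_general T η q lam hη hq hlam c hc Lam hLam ω hω K hK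
end

section
/- Let μ be a Borel probability measure on ℝ^d with finite second moment and mean μ̄ = ∫x μ(dx). Let Q, Q̄, k, ℓ, Z^K, Z^Λ ∈ 𝕊^d, let B, B̄, D, D̄, D⁰, D̄⁰ ∈ ℝ^{d×d}, C, F, F⁰ ∈ ℝ^{d×m}, M, b⁰, γ, γ⁰, y, Z^Y ∈ ℝ^d, N ∈ 𝕊^m and a ∈ ℝ^m. Define the affine maps b(x) = b⁰ + Bx + B̄μ̄ + Ca, σ(x) = γ + Dx + D̄μ̄ + Fa, σ⁰(x) = γ⁰ + D⁰x + D̄⁰μ̄ + F⁰a. Then: [Var(μ,Q) + μ̄ᵀ(Q+Q̄)μ̄ + Mᵀμ̄ + aᵀNa] + ∫ b(x)ᵀ(2k(x−μ̄) + 2ℓμ̄ + y) μ(dx) + ∫ (σ(x)ᵀkσ(x) + σ⁰(x)ᵀkσ⁰(x)) μ(dx) + (∫σ⁰(x)μ(dx))ᵀ(ℓ − k)(∫σ⁰(x)μ(dx)) + ∫ σ⁰(x)ᵀ(2Z^K(x−μ̄) + 2Z^Λμ̄ + Z^Y) μ(dx) = Var(μ, Φ) + μ̄ᵀΨμ̄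 + Θᵀμ̄ + Δ + aᵀΓa + (2Uᵀμ̄ + R)ᵀa, where Φ = Q + Bᵀk + kB + DᵀkD + (D⁰)ᵀkD⁰ + (D⁰)ᵀZ^K + Z^K D⁰; Ψ = Q + Q̄ + (D+D̄)ᵀk(D+D̄) + (D⁰+D̄⁰)ᵀℓ(D⁰+D̄⁰) + (B+B̄)ᵀℓ + ℓ(B+B̄) + (D⁰+D̄⁰)ᵀZ^Λ + Z^Λ(D⁰+D̄⁰); Θ = M + (B+B̄)ᵀy + 2ℓb⁰ + 2(D+D̄)ᵀkγ + 2(D⁰+D̄⁰)ᵀℓγ⁰ + (D⁰+D̄⁰)ᵀZ^Y + 2Z^Λγ⁰; Δ = yᵀb⁰ + γᵀkγ + (γ⁰)ᵀℓγ⁰ + (Z^Y)ᵀγ⁰; Γ = N + FᵀkF + (F⁰)ᵀℓF⁰; U = (D+D̄)ᵀkF + (D⁰+D̄⁰)ᵀℓF⁰ + ℓC + Z^ΛF⁰; and R = 2Fᵀkγ + 2(F⁰)ᵀℓγ⁰ + Cᵀy + (F⁰)ᵀZ^Y. (This is the algebraic identity of Section 3.1 computing the drift 𝒟_t(μ,a,k,ℓ,y)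 of the process S^α in grouped form (3.5), which leads to the backward stochastic Riccati system (3.7) in the open-loop case A = ℝ^m.) -/
/-!
Write each affine map as its value at the mean plus a linear map of `x - μ̄`; in particular
`∫ σ⁰ dμ = σ⁰(μ̄)`. Every integrand then has the form `c + wᵀ(x - μ̄) + (x - μ̄)ᵀA(x - μ̄)`, and
since the linear term integrates to zero its integral is `c + Var(μ, A)`. The matrices `A` that
arise add up to `Φ` because `k` and `Z^K` are symmetric, and the constants `c`, expanded as
polynomials in `(μ̄, a)`, regroup into the coefficients `Ψ, Θ, Δ, Γ, U, R`.
-/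

open MeasureTheory Matrix

section Algebra

variable {R n m : Type*} [CommRing R] [Fintype n] [Fintype m]

theorem Matrix.IsSymm.dotProduct_mulVec_comm {S : Matrix n n R} (hS : S.IsSymm) (x y : n → R) :
    x ⬝ᵥ S *ᵥ y = y ⬝ᵥ S *ᵥ x := by
  conv_lhs => rw [← hS.eq]
  exact dotProduct_transpose_mulVec S x y

theorem Matrix.transpose_mulVec_dotProduct (A : Matrix m n R) (x : m → R) (y : n → R) :
    (Aᵀ *ᵥ x) ⬝ᵥ y = x ⬝ᵥ A *ᵥ y := by
  rw [dotProduct_comm, dotProduct_transpose_mulVec]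

theorem add_mulVec_dotProduct_mulVec_self (S L : Matrix n n R) (c v : n → R) :
    (c + L *ᵥ v) ⬝ᵥ S *ᵥ (c + L *ᵥ v)
      = c ⬝ᵥ S *ᵥ c + (Lᵀ *ᵥ (S + Sᵀ) *ᵥ c) ⬝ᵥ v + v ⬝ᵥ (Lᵀ * S * L) *ᵥ v := by
  rw [← mulVec_mulVec, ← mulVec_mulVec, dotProduct_comm _ v, dotProduct_transpose_mulVec,
    dotProduct_transpose_mulVec]
  simp only [mulVec_add, add_mulVec, add_dotProduct, dotProduct_add]
  rw [dotProduct_comm (S *ᵥ c), dotProduct_comm (Sᵀ *ᵥ c), dotProduct_transpose_mulVec,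
    dotProduct_comm (S *ᵥ L *ᵥ v)]
  ring

theorem add_mulVec_dotProduct_two_smul_mulVec_add (S L : Matrix n n R) (c v w : n → R) :
    (c + L *ᵥ v) ⬝ᵥ ((2 : R) • S *ᵥ v + w)
      = c ⬝ᵥ w + ((2 : R) • Sᵀ *ᵥ c + Lᵀ *ᵥ w) ⬝ᵥ v + v ⬝ᵥ (Lᵀ * S + Sᵀ * L) *ᵥ v := by
  simp only [add_mulVec, ← mulVec_mulVec, add_dotProduct, dotProduct_add, dotProduct_smul,
    dotProduct_comm _ v, dotProduct_transpose_mulVec, smul_eq_mul]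
  rw [dotProduct_comm (S *ᵥ v) (L *ᵥ v), dotProduct_comm w]
  ring

theorem Matrix.IsSymm.add_add_dotProduct_mulVec_self {S : Matrix n n R} (hS : S.IsSymm)
    (L : Matrix n n R) (F : Matrix n m R) (g u : n → R) (a : m → R) :
    (g + L *ᵥ u + F *ᵥ a) ⬝ᵥ S *ᵥ (g + L *ᵥ u + F *ᵥ a)
      = u ⬝ᵥ (Lᵀ * S * L) *ᵥ u + ((2 : R) • Lᵀ *ᵥ S *ᵥ g) ⬝ᵥ u + g ⬝ᵥ S *ᵥ g
        + a ⬝ᵥ (Fᵀ * S * F) *ᵥ a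
        + ((2 : R) • (Lᵀ * S * F)ᵀ *ᵥ u + (2 : R) • Fᵀ *ᵥ S *ᵥ g) ⬝ᵥ a := by
  simp only [transpose_mul, transpose_transpose, hS.eq, ← mulVec_mulVec, mulVec_add,
    add_dotProduct, dotProduct_add, smul_dotProduct, dotProduct_transpose_mulVec,
    transpose_mulVec_dotProduct, smul_eq_mul, dotProduct_comm (S *ᵥ _)]
  rw [hS.dotProduct_mulVec_comm g (L *ᵥ u), hS.dotProduct_mulVec_comm g (F *ᵥ a),
    hS.dotProduct_mulVec_comm (L *ᵥ u) (F *ᵥ a)]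
  ring

theorem Matrix.IsSymm.add_add_dotProduct_two_smul_mulVec_add {S : Matrix n n R}
    (hS : S.IsSymm) (L : Matrix n n R) (F : Matrix n m R) (g u w : n → R) (a : m → R) :
    (g + L *ᵥ u + F *ᵥ a) ⬝ᵥ ((2 : R) • S *ᵥ u + w)
      = u ⬝ᵥ (Lᵀ * S + S * L) *ᵥ u + (Lᵀ *ᵥ w + (2 : R) • S *ᵥ g) ⬝ᵥ u + w ⬝ᵥ g
        + ((2 : R) • (S * F)ᵀ *ᵥ u + Fᵀ *ᵥ w) ⬝ᵥ a := by
  simp only [transpose_mul, hS.eq, ← mulVec_mulVec, add_mulVec, add_dotProduct, dotProduct_add,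
    smul_dotProduct, dotProduct_smul, dotProduct_transpose_mulVec, transpose_mulVec_dotProduct,
    smul_eq_mul, dotProduct_comm (S *ᵥ _), dotProduct_comm w]
  rw [hS.dotProduct_mulVec_comm u, hS.dotProduct_mulVec_comm u]
  ring

end Algebra

theorem integral_map_sub_integral {E F : Type*} [NormedAddCommGroup E] [NormedSpace ℝ E]
    [CompleteSpace E] [NormedAddCommGroup F] [NormedSpace ℝ F] [CompleteSpace F]
    [MeasurableSpace E] {μ : Measure E} [IsProbabilityMeasure μ]
    (hμ : Integrable (fun x => x) μ) (T : E →L[ℝ] F) :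
    ∫ x, T (x - ∫ y, y ∂μ) ∂μ = 0 := by
  have hcentered : Integrable (fun x => x - ∫ y, y ∂μ) μ := hμ.sub (integrable_const _)
  rw [T.integral_comp_comm hcentered, integral_sub hμ (integrable_const _),
    integral_const, probReal_univ, one_smul, sub_self, map_zero]

section SecondMoment

variable {ι : Type*} [Fintype ι] {μ : Measure (ι → ℝ)}

theorem memLp_two_id (hμ2 : Integrable (fun x => ∑ i, x i ^ 2) μ) :
    MemLp (fun x => x) 2 μ := by
  refine MemLp.of_eval fun i => ?_
  have hmeas : AEStronglyMeasurable (fun x : ι → ℝ => x i) μ :=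
    (measurable_pi_apply i).aestronglyMeasurable
  refine (memLp_two_iff_integrable_sq hmeas).2
    (hμ2.mono' (hmeas.pow 2) (.of_forall fun x => ?_))
  rw [Real.norm_of_nonneg (sq_nonneg _)]
  exact Finset.single_le_sum (fun j _ => sq_nonneg (x j)) (Finset.mem_univ i)

variable [IsFiniteMeasure μ]

theorem integrable_dotProduct_sub (hμ2 : Integrable (fun x => ∑ i, x i ^ 2) μ)
    (w z : ι → ℝ) : Integrable (fun x => w ⬝ᵥ (x - z)) μ := by
  have hz : MemLp (fun x => x - z) 2 μ := (memLp_two_id hμ2).sub (memLp_const z)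
  exact integrable_finsetSum _ fun i _ => ((hz.eval i).integrable one_le_two).const_mul (w i)

theorem integrable_quadForm_sub (hμ2 : Integrable (fun x => ∑ i, x i ^ 2) μ) (z : ι → ℝ)
    (A : Matrix ι ι ℝ) :
    Integrable (fun x => (x - z) ⬝ᵥ A *ᵥ (x - z)) μ := by
  have hz : MemLp (fun x => x - z) 2 μ := (memLp_two_id hμ2).sub (memLp_const z)
  simp only [dotProduct, mulVec, Finset.mul_sum]
  refine integrable_finsetSum _ fun i _ => integrable_finsetSum _ fun j _ => ?_
  exact ((hz.eval i).integrable_mul (hz.eval j)).const_mul (A i j) |>.congr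
    (.of_forall fun x => by simp only [Pi.mul_apply]; ring)

theorem integrable_add_dotProduct_sub_add_quadForm_sub
    (hμ2 : Integrable (fun x => ∑ i, x i ^ 2) μ) (c : ℝ) (w z : ι → ℝ) (A : Matrix ι ι ℝ) :
    Integrable (fun x => c + w ⬝ᵥ (x - z) + (x - z) ⬝ᵥ A *ᵥ (x - z)) μ :=
  ((integrable_const c).add (integrable_dotProduct_sub hμ2 w z)).add
    (integrable_quadForm_sub hμ2 z A)

theorem integrable_add_mulVec_dotProduct_mulVec_self
    (hμ2 : Integrable (fun x => ∑ i, x i ^ 2) μ) (c z : ι → ℝ) (S L : Matrix ι ι ℝ) :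
    Integrable (fun x => (c + L *ᵥ (x - z)) ⬝ᵥ S *ᵥ (c + L *ᵥ (x - z))) μ := by
  simp_rw [add_mulVec_dotProduct_mulVec_self]
  exact integrable_add_dotProduct_sub_add_quadForm_sub hμ2 _ _ _ _

theorem integral_quadForm_sub_add (hμ2 : Integrable (fun x => ∑ i, x i ^ 2) μ) (z : ι → ℝ)
    (A A' : Matrix ι ι ℝ) :
    ∫ x, (x - z) ⬝ᵥ (A + A') *ᵥ (x - z) ∂μ
      = ∫ x, (x - z) ⬝ᵥ A *ᵥ (x - z) ∂μ + ∫ x, (x - z) ⬝ᵥ A' *ᵥ (x - z) ∂μ := by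
  simp only [add_mulVec, dotProduct_add]
  exact integral_add (integrable_quadForm_sub hμ2 z A) (integrable_quadForm_sub hμ2 z A')

end SecondMoment

section Centered

variable {ι : Type*} [Fintype ι] {μ : Measure (ι → ℝ)} [IsProbabilityMeasure μ]

theorem integral_add_mulVec_sub_integral (hμ : Integrable (fun x => x) μ) (c : ι → ℝ)
    (L : Matrix ι ι ℝ) :
    ∫ x, (c + L *ᵥ (x - ∫ y, y ∂μ)) ∂μ = c := by
  let T := LinearMap.toContinuousLinearMap (mulVecLin L)
  have hint : Integrable (fun x => L *ᵥ (x - ∫ y, y ∂μ)) μ :=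
    T.integrable_comp (hμ.sub (integrable_const _))
  have hzero : ∫ x, L *ᵥ (x - ∫ y, y ∂μ) ∂μ = 0 := integral_map_sub_integral hμ T
  rw [integral_add (integrable_const c) hint, hzero, integral_const,
    probReal_univ, one_smul, add_zero]

theorem integral_add_dotProduct_add_quadForm_sub_integral
    (hμ2 : Integrable (fun x => ∑ i, x i ^ 2) μ) (c : ℝ) (w : ι → ℝ) (A : Matrix ι ι ℝ) :
    ∫ x, (c + w ⬝ᵥ (x - ∫ y, y ∂μ) + (x - ∫ y, y ∂μ) ⬝ᵥ A *ᵥ (x - ∫ y, y ∂μ)) ∂μ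
      = c + ∫ x, (x - ∫ y, y ∂μ) ⬝ᵥ A *ᵥ (x - ∫ y, y ∂μ) ∂μ := by
  have hlin := integrable_dotProduct_sub hμ2 w (∫ y, y ∂μ)
  have haffine : Integrable (fun x => c + w ⬝ᵥ (x - ∫ y, y ∂μ)) μ :=
    (integrable_const c).add hlin
  have hzero : ∫ x, w ⬝ᵥ (x - ∫ y, y ∂μ) ∂μ = 0 :=
    integral_map_sub_integral ((memLp_two_id hμ2).integrable one_le_two)
      (LinearMap.toContinuousLinearMap (dotProductBilin ℝ ℝ w))
  rw [integral_add haffine (integrable_quadForm_sub hμ2 _ A),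
    integral_add (integrable_const c) hlin, hzero, integral_const, probReal_univ, one_smul,
    add_zero]

theorem integral_add_mulVec_dotProduct_mulVec_self
    (hμ2 : Integrable (fun x => ∑ i, x i ^ 2) μ) (c : ι → ℝ) (S L : Matrix ι ι ℝ) :
    ∫ x, (c + L *ᵥ (x - ∫ y, y ∂μ)) ⬝ᵥ S *ᵥ (c + L *ᵥ (x - ∫ y, y ∂μ)) ∂μ
      = c ⬝ᵥ S *ᵥ c + ∫ x, (x - ∫ y, y ∂μ) ⬝ᵥ (Lᵀ * S * L) *ᵥ (x - ∫ y, y ∂μ) ∂μ := by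
  simp_rw [add_mulVec_dotProduct_mulVec_self]
  exact integral_add_dotProduct_add_quadForm_sub_integral hμ2 _ _ _

theorem integral_add_mulVec_dotProduct_two_smul_mulVec_add
    (hμ2 : Integrable (fun x => ∑ i, x i ^ 2) μ) (c w : ι → ℝ) (S L : Matrix ι ι ℝ) :
    ∫ x, (c + L *ᵥ (x - ∫ y, y ∂μ)) ⬝ᵥ ((2 : ℝ) • S *ᵥ (x - ∫ y, y ∂μ) + w) ∂μ
      = c ⬝ᵥ w + ∫ x, (x - ∫ y, y ∂μ) ⬝ᵥ (Lᵀ * S) *ᵥ (x - ∫ y, y ∂μ) ∂μ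
        + ∫ x, (x - ∫ y, y ∂μ) ⬝ᵥ (Sᵀ * L) *ᵥ (x - ∫ y, y ∂μ) ∂μ := by
  simp_rw [add_mulVec_dotProduct_two_smul_mulVec_add]
  rw [integral_add_dotProduct_add_quadForm_sub_integral hμ2, integral_quadForm_sub_add hμ2,
    add_assoc]

end Centered

theorem stmt_16_general (d m : ℕ) (μ : Measure (Fin d → ℝ)) [IsProbabilityMeasure μ]
    (hμ2 : Integrable (fun x => ∑ i, (x i) ^ 2) μ)
    (Q Qb k ℓ ZK ZΛ : Matrix (Fin d) (Fin d) ℝ)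
    (hk : k.IsSymm) (hℓ : ℓ.IsSymm)
    (hZK : ZK.IsSymm) (hZΛ : ZΛ.IsSymm)
    (B Bb D Db D0 Db0 : Matrix (Fin d) (Fin d) ℝ)
    (C F F0 : Matrix (Fin d) (Fin m) ℝ)
    (M b0 γ γ0 y ZY : Fin d → ℝ)
    (N : Matrix (Fin m) (Fin m) ℝ)
    (a : Fin m → ℝ)
    (mb : Fin d → ℝ) (hmb : mb = ∫ x, x ∂μ)
    (b σ σ0 : (Fin d → ℝ) → (Fin d → ℝ))
    (hb : ∀ x, b x = b0 + B.mulVec x + Bb.mulVec mb + C.mulVec a)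
    (hσ : ∀ x, σ x = γ + D.mulVec x + Db.mulVec mb + F.mulVec a)
    (hσ0 : ∀ x, σ0 x = γ0 + D0.mulVec x + Db0.mulVec mb + F0.mulVec a)
    (Φ Ψ : Matrix (Fin d) (Fin d) ℝ) (Θ : Fin d → ℝ) (Δ : ℝ)
    (Γ : Matrix (Fin m) (Fin m) ℝ) (U : Matrix (Fin d) (Fin m) ℝ) (R : Fin m → ℝ)
    (hΦ : Φ = Q + B.transpose * k + k * B + D.transpose * k * D + D0.transpose * k * D0
      + D0.transpose * ZK + ZK * D0)
    (hΨ : Ψ = Q + Qb + (D + Db).transpose * k * (D + Db)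
      + (D0 + Db0).transpose * ℓ * (D0 + Db0)
      + (B + Bb).transpose * ℓ + ℓ * (B + Bb)
      + (D0 + Db0).transpose * ZΛ + ZΛ * (D0 + Db0))
    (hΘ : Θ = M + (B + Bb).transpose.mulVec y + (2 : ℝ) • ℓ.mulVec b0
      + (2 : ℝ) • (D + Db).transpose.mulVec (k.mulVec γ)
      + (2 : ℝ) • (D0 + Db0).transpose.mulVec (ℓ.mulVec γ0)
      + (D0 + Db0).transpose.mulVec ZY + (2 : ℝ) • ZΛ.mulVec γ0)
    (hΔ : Δ = y ⬝ᵥ b0 + γ ⬝ᵥ k.mulVec γ + γ0 ⬝ᵥ ℓ.mulVec γ0 + ZY ⬝ᵥ γ0)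
    (hΓ : Γ = N + F.transpose * k * F + F0.transpose * ℓ * F0)
    (hU : U = (D + Db).transpose * k * F + (D0 + Db0).transpose * ℓ * F0 + ℓ * C + ZΛ * F0)
    (hR : R = (2 : ℝ) • F.transpose.mulVec (k.mulVec γ)
      + (2 : ℝ) • F0.transpose.mulVec (ℓ.mulVec γ0)
      + C.transpose.mulVec y + F0.transpose.mulVec ZY) :
    ((∫ x, (x - mb) ⬝ᵥ Q.mulVec (x - mb) ∂μ) + mb ⬝ᵥ (Q + Qb).mulVec mb
        + M ⬝ᵥ mb + a ⬝ᵥ N.mulVec a)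
      + (∫ x, b x ⬝ᵥ ((2 : ℝ) • k.mulVec (x - mb) + (2 : ℝ) • ℓ.mulVec mb + y) ∂μ)
      + (∫ x, (σ x ⬝ᵥ k.mulVec (σ x) + σ0 x ⬝ᵥ k.mulVec (σ0 x)) ∂μ)
      + (∫ x, σ0 x ∂μ) ⬝ᵥ (ℓ - k).mulVec (∫ x, σ0 x ∂μ)
      + (∫ x, σ0 x ⬝ᵥ ((2 : ℝ) • ZK.mulVec (x - mb) + (2 : ℝ) • ZΛ.mulVec mb + ZY) ∂μ)
    = (∫ x, (x - mb) ⬝ᵥ Φ.mulVec (x - mb) ∂μ) + mb ⬝ᵥ Ψ.mulVec mb + Θ ⬝ᵥ mb + Δ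
      + a ⬝ᵥ Γ.mulVec a + ((2 : ℝ) • U.transpose.mulVec mb + R) ⬝ᵥ a := by
  subst hmb hΦ hΨ hΘ hΔ hΓ hU hR
  set mb := ∫ x, x ∂μ with hmb
  have hb' : ∀ x, b x = (b0 + (B + Bb) *ᵥ mb + C *ᵥ a) + B *ᵥ (x - mb) := fun x => by
    rw [hb, add_mulVec, mulVec_sub]; abel
  have hσ' : ∀ x, σ x = (γ + (D + Db) *ᵥ mb + F *ᵥ a) + D *ᵥ (x - mb) := fun x => by
    rw [hσ, add_mulVec, mulVec_sub]; abel
  have hσ0' : ∀ x, σ0 x = (γ0 + (D0 + Db0) *ᵥ mb + F0 *ᵥ a) + D0 *ᵥ (x - mb) := fun x => by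
    rw [hσ0, add_mulVec, mulVec_sub]; abel
  simp_rw [hb', hσ', hσ0', add_assoc ((2 : ℝ) • _ *ᵥ (_ - mb))]
  rw [integral_add (integrable_add_mulVec_dotProduct_mulVec_self hμ2 _ _ _ _)
      (integrable_add_mulVec_dotProduct_mulVec_self hμ2 _ _ _ _),
    integral_add_mulVec_dotProduct_mulVec_self hμ2, integral_add_mulVec_dotProduct_mulVec_self hμ2,
    integral_add_mulVec_dotProduct_two_smul_mulVec_add hμ2,
    integral_add_mulVec_dotProduct_two_smul_mulVec_add hμ2,
    integral_add_mulVec_sub_integral ((memLp_two_id hμ2).integrable one_le_two), ← hmb]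
  simp only [integral_quadForm_sub_add hμ2, hk.eq, hZK.eq]
  rw [sub_mulVec, dotProduct_sub,
    hℓ.add_add_dotProduct_two_smul_mulVec_add, hk.add_add_dotProduct_mulVec_self,
    hℓ.add_add_dotProduct_mulVec_self, hZΛ.add_add_dotProduct_two_smul_mulVec_add]
  simp only [add_mulVec, add_dotProduct, dotProduct_add, transpose_add, smul_add]
  ring

/-- The algebraic identity of Section 3.1 computing the drift 𝒟_t(μ,a,k,ℓ,y) of the process
S^α in grouped form (3.5), leading to the backward stochastic Riccati system (3.7) in the
open-loop case A = ℝ^m. -/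
theorem stmt_16 (d m : ℕ) (μ : Measure (Fin d → ℝ)) [IsProbabilityMeasure μ]
    (hμ2 : Integrable (fun x => ∑ i, (x i) ^ 2) μ)
    (Q Qb k ℓ ZK ZΛ : Matrix (Fin d) (Fin d) ℝ)
    (hQ : Q.IsSymm) (hQb : Qb.IsSymm) (hk : k.IsSymm) (hℓ : ℓ.IsSymm)
    (hZK : ZK.IsSymm) (hZΛ : ZΛ.IsSymm)
    (B Bb D Db D0 Db0 : Matrix (Fin d) (Fin d) ℝ)
    (C F F0 : Matrix (Fin d) (Fin m) ℝ)
    (M b0 γ γ0 y ZY : Fin d → ℝ)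
    (N : Matrix (Fin m) (Fin m) ℝ) (hN : N.IsSymm)
    (a : Fin m → ℝ)
    (mb : Fin d → ℝ) (hmb : mb = ∫ x, x ∂μ)
    (b σ σ0 : (Fin d → ℝ) → (Fin d → ℝ))
    (hb : ∀ x, b x = b0 + B.mulVec x + Bb.mulVec mb + C.mulVec a)
    (hσ : ∀ x, σ x = γ + D.mulVec x + Db.mulVec mb + F.mulVec a)
    (hσ0 : ∀ x, σ0 x = γ0 + D0.mulVec x + Db0.mulVec mb + F0.mulVec a)
    (Φ Ψ : Matrix (Fin d) (Fin d) ℝ) (Θ : Fin d → ℝ) (Δ : ℝ)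
    (Γ : Matrix (Fin m) (Fin m) ℝ) (U : Matrix (Fin d) (Fin m) ℝ) (R : Fin m → ℝ)
    (hΦ : Φ = Q + B.transpose * k + k * B + D.transpose * k * D + D0.transpose * k * D0
      + D0.transpose * ZK + ZK * D0)
    (hΨ : Ψ = Q + Qb + (D + Db).transpose * k * (D + Db)
      + (D0 + Db0).transpose * ℓ * (D0 + Db0)
      + (B + Bb).transpose * ℓ + ℓ * (B + Bb)
      + (D0 + Db0).transpose * ZΛ + ZΛ * (D0 + Db0))
    (hΘ : Θ = M + (B + Bb).transpose.mulVec y + (2 : ℝ) • ℓ.mulVec b0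
      + (2 : ℝ) • (D + Db).transpose.mulVec (k.mulVec γ)
      + (2 : ℝ) • (D0 + Db0).transpose.mulVec (ℓ.mulVec γ0)
      + (D0 + Db0).transpose.mulVec ZY + (2 : ℝ) • ZΛ.mulVec γ0)
    (hΔ : Δ = y ⬝ᵥ b0 + γ ⬝ᵥ k.mulVec γ + γ0 ⬝ᵥ ℓ.mulVec γ0 + ZY ⬝ᵥ γ0)
    (hΓ : Γ = N + F.transpose * k * F + F0.transpose * ℓ * F0)
    (hU : U = (D + Db).transpose * k * F + (D0 + Db0).transpose * ℓ * F0 + ℓ * C + ZΛ * F0)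
    (hR : R = (2 : ℝ) • F.transpose.mulVec (k.mulVec γ)
      + (2 : ℝ) • F0.transpose.mulVec (ℓ.mulVec γ0)
      + C.transpose.mulVec y + F0.transpose.mulVec ZY) :
    ((∫ x, (x - mb) ⬝ᵥ Q.mulVec (x - mb) ∂μ) + mb ⬝ᵥ (Q + Qb).mulVec mb
        + M ⬝ᵥ mb + a ⬝ᵥ N.mulVec a)
      + (∫ x, b x ⬝ᵥ ((2 : ℝ) • k.mulVec (x - mb) + (2 : ℝ) • ℓ.mulVec mb + y) ∂μ)
      + (∫ x, (σ x ⬝ᵥ k.mulVec (σ x) + σ0 x ⬝ᵥ k.mulVec (σ0 x)) ∂μ)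
      + (∫ x, σ0 x ∂μ) ⬝ᵥ (ℓ - k).mulVec (∫ x, σ0 x ∂μ)
      + (∫ x, σ0 x ⬝ᵥ ((2 : ℝ) • ZK.mulVec (x - mb) + (2 : ℝ) • ZΛ.mulVec mb + ZY) ∂μ)
    = (∫ x, (x - mb) ⬝ᵥ Φ.mulVec (x - mb) ∂μ) + mb ⬝ᵥ Ψ.mulVec mb + Θ ⬝ᵥ mb + Δ
      + a ⬝ᵥ Γ.mulVec a + ((2 : ℝ) • U.transpose.mulVec mb + R) ⬝ᵥ a :=
  stmt_16_general d m μ hμ2 Q Qb k ℓ ZK ZΛ hk hℓ hZK hZΛ B Bb D Db D0 Db0 C F F0 M b0 γ γ0 y ZY N a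
    mb hmb b σ σ0 hb hσ hσ0 Φ Ψ Θ Δ Γ U R hΦ hΨ hΘ hΔ hΓ hU hR
end
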